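/- Let G be a finite connected weighted graph with positive edge weights x, and first Betti number b1. Let M be the |E⁺| × b1 integer matrix whose columns express an integral basis (γ_1,…,γ_{b1}) of the cycle group Z_1(G,ℤ) in the edge basis, and let C = diag(x_e : e ∈ E⁺). Then det(Mᵀ C^{−1} M) = Σ_{T spanning tree of G} Π_{e ∈ E⁺∖T} x_e^{−1}; equivalently, (Π_{e∈E⁺} x_e) · det(Mᵀ C^{−1} M) = Σ_T Π_{e∈T} x_e. -/

import Mathlib

/-! Framework: finite graph `(V, E, head, tail)`, chains `C₁(G,ℤ)` modeled as `E → ℤ`. -/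

section Graph

variable {V E : Type*} [Fintype V] [Fintype E] [DecidableEq V] [DecidableEq E]

/-- The boundary operator `∂ : C₁(G,ℤ) → C₀(G,ℤ)`; its kernel is the cycle group. -/
def bd (head tail : E → V) : (E → ℤ) →ₗ[ℤ] (V → ℤ) where
  toFun c := fun v => ∑ e, c e *
    ((if head e = v then 1 else 0) - (if tail e = v then 1 else 0))
  map_add' c d := by
    funext v
    simp [add_mul, Finset.sum_add_distrib]
  map_smul' r c := by
    funext v
    simp [Finset.mul_sum, mul_assoc]

/-- Two vertices are connected through the edges of `T`. -/
def Conn (head tail : E → V) (T : Finset E) (v w : V) : Prop :=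
  Relation.ReflTransGen
    (fun a b => ∃ e ∈ T, (head e = a ∧ tail e = b) ∨ (head e = b ∧ tail e = a)) v w

/-- `T` is a spanning tree. -/
def IsSpanningTree (head tail : E → V) (T : Finset E) : Prop :=
  T.card + 1 = Fintype.card V ∧ ∀ v w : V, Conn head tail T v w

end Graph

open Classical

/-! By Cauchy–Binet, `b₁! · det (Mᵀ D M)` with `D = diag d` is the sum over all maps
`φ : Fin b₁ → E` of `det (M_φ)² ∏ᵢ d (φ i)`, where `M_φ` is the minor on the rows `φ`.
Such a minor squares to `1` if `φ` is injective and the remaining edges `T` form a spanning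
tree, and to `0` otherwise. If `T` is connected, the fundamental cycles of `T` lie in the
`ℤ`-span of the `γᵢ` and restrict to unit vectors on the rows `φ`, which gives an integral
left inverse of `M_φᵀ`. Conversely, if `det M_φ ≠ 0`, then for every row `φ j` some real
combination of the `γᵢ` is `1` at `φ j` and `0` on the other rows; like every cycle it is
orthogonal to every cut, and its pairing with the cut around the `T`-component of
`head (φ j)` is `1` unless `tail (φ j)` lies in that component, so `T` is connected; having
`|V| - 1` edges when `φ` is injective, it is then a spanning tree. -/

open Matrix Finset

section CauchyBinet

variable {R m n : Type*} [CommRing R] [Fintype m] [Fintype n] [DecidableEq n]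

theorem det_transpose_mul_eq_sum_det_submatrix_mul_prod (A B : Matrix m n R) :
    (Aᵀ * B).det = ∑ φ : n → m, (A.submatrix φ id).det * ∏ i, B (φ i) i := by
  calc (Aᵀ * B).det
      = ∑ σ : Equiv.Perm n, ∑ φ : n → m,
          Equiv.Perm.sign σ • ∏ i, (A (φ i) (σ i) * B (φ i) i) := by
        simp only [det_apply', mul_apply, transpose_apply, prod_univ_sum,
          Fintype.piFinset_univ, mul_sum, Units.smul_def, zsmul_eq_mul]
    _ = ∑ φ : n → m, (A.submatrix φ id).det * ∏ i, B (φ i) i := by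
        rw [sum_comm]
        refine sum_congr rfl fun φ _ => ?_
        rw [← det_transpose, det_apply, sum_mul]
        simp [prod_mul_distrib, smul_mul_assoc]

/-- The Cauchy–Binet formula, with the minors indexed by all maps `n → m` rather than by the
`card n`-subsets of `m`, so that no enumeration of the subsets is needed. -/
theorem factorial_card_mul_det_transpose_mul (A B : Matrix m n R) :
    (Fintype.card n).factorial * (Aᵀ * B).det =
      ∑ φ : n → m, (A.submatrix φ id).det * (B.submatrix φ id).det := by
  set H : (n → m) → R := fun φ => (A.submatrix φ id).det * ∏ i, B (φ i) i
  calc (Fintype.card n).factorial * (Aᵀ * B).det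
      = ∑ π : Equiv.Perm n, ∑ φ : n → m, H φ := by
        rw [sum_const, card_univ, Fintype.card_perm, nsmul_eq_mul,
          det_transpose_mul_eq_sum_det_submatrix_mul_prod]
    _ = ∑ π : Equiv.Perm n, ∑ φ : n → m, H (φ ∘ π) :=
        sum_congr rfl fun π _ =>
          (Equiv.sum_comp (Equiv.arrowCongr π.symm (Equiv.refl m)) H).symm
    _ = ∑ φ : n → m, (A.submatrix φ id).det * (B.submatrix φ id).det := by
        rw [sum_comm]
        refine sum_congr rfl fun φ _ => ?_
        rw [det_apply (B.submatrix φ id), mul_sum]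
        refine sum_congr rfl fun π _ => ?_
        have hperm : (A.submatrix (φ ∘ π) id).det =
            Equiv.Perm.sign π • (A.submatrix φ id).det := by
          simpa [Units.smul_def] using det_permute π (A.submatrix φ id)
        simp only [H, hperm, submatrix_apply, id, Function.comp_apply, mul_smul_comm,
          smul_mul_assoc]

theorem factorial_card_mul_det_transpose_mul_diagonal_mul [DecidableEq m]
    (A : Matrix m n R) (d : m → R) :
    (Fintype.card n).factorial * (Aᵀ * diagonal d * A).det =
      ∑ φ : n → m, (A.submatrix φ id).det ^ 2 * ∏ i, d (φ i) := by
  rw [Matrix.mul_assoc, factorial_card_mul_det_transpose_mul]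
  refine sum_congr rfl fun φ _ => ?_
  rw [show (diagonal d * A).submatrix φ id = diagonal (d ∘ φ) * A.submatrix φ id by
    ext; simp [diagonal_mul], det_mul, det_diagonal]
  simp only [Function.comp_apply]
  ring

end CauchyBinet

section Counting

variable {m n : Type*} [Fintype m] [Fintype n] [DecidableEq m] [DecidableEq n]

theorem card_filter_injective_image_eq {S : Finset m} (hS : #S = Fintype.card n) :
    #{φ : n → m | Function.Injective φ ∧ univ.image φ = S} = (Fintype.card n).factorial := by
  have hemb : Fintype.card (n ↪ S) = (Fintype.card n).factorial := by
    rw [Fintype.card_embedding_eq, Fintype.card_coe, hS, Nat.descFactorial_self]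
  rw [← hemb, ← card_univ]
  symm
  refine card_bij (fun ψ _ => Subtype.val ∘ ψ) (fun ψ _ => ?_) (fun ψ _ ψ' _ h => ?_)
    (fun φ hφ => ?_)
  · have hinj : Function.Injective (Subtype.val ∘ ψ) := Subtype.val_injective.comp ψ.injective
    refine mem_filter.mpr ⟨mem_univ _, hinj, eq_of_subset_of_card_le ?_ ?_⟩
    · simp [image_subset_iff]
    · rw [card_image_of_injective _ hinj, card_univ, hS]
  · ext k
    exact congrFun h k
  · obtain ⟨hinj, himg⟩ := (mem_filter.mp hφ).2
    exact ⟨⟨fun k => ⟨φ k, himg ▸ mem_image_of_mem φ (mem_univ k)⟩,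
      fun a b h => hinj (congrArg Subtype.val h)⟩, mem_univ _, rfl⟩

theorem sum_injective_eq_factorial_smul_sum_card {M : Type*} [AddCommMonoid M]
    (w : Finset m → M) :
    ∑ φ : n → m with Function.Injective φ, w (univ.image φ) =
      (Fintype.card n).factorial • ∑ S : Finset m with #S = Fintype.card n, w S := by
  rw [← sum_fiberwise_of_maps_to (g := fun φ : n → m => univ.image φ)
    (t := {S : Finset m | #S = Fintype.card n}), smul_sum]
  · refine sum_congr rfl fun S hS => ?_
    rw [filter_filter, ← card_filter_injective_image_eq (mem_filter.mp hS).2, card_eq_sum_ones,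
      sum_smul, one_smul]
    exact sum_congr rfl fun φ hφ => by rw [(mem_filter.mp hφ).2.2]
  · intro φ hφ
    simp [card_image_of_injective _ (mem_filter.mp hφ).2]

end Counting

section Graph

variable {V E ι : Type*} {head tail : E → V}

lemma Conn.symm {T : Finset E} {v w : V} (h : Conn head tail T v w) : Conn head tail T w v :=
  Relation.ReflTransGen.mono (fun _ _ ⟨e, he, h⟩ => ⟨e, he, h.symm⟩) _ _
    (Relation.ReflTransGen.swap _ _ h)

lemma conn_of_forall_edge [Fintype E] {T : Finset E} (hconn : ∀ v w, Conn head tail univ v w)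
    (hT : ∀ f, Conn head tail T (head f) (tail f)) (v w : V) : Conn head tail T v w :=
  Relation.reflTransGen_closed (fun _ _ ⟨e, _, h⟩ => by
    rcases h with ⟨rfl, rfl⟩ | ⟨rfl, rfl⟩
    exacts [hT e, (hT e).symm]) _ _ (hconn v w)

lemma IsSpanningTree.card_compl [Fintype V] [Fintype E] [DecidableEq E] {b : ℕ}
    (hb : b + Fintype.card V = Fintype.card E + 1) {T : Finset E}
    (hT : IsSpanningTree head tail T) : #Tᶜ = b := by
  have := hT.1
  have := card_le_univ T
  rw [Finset.card_compl]
  omega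

variable [Fintype E] [DecidableEq V]

lemma bd_apply (c : E → ℤ) (v : V) :
    bd head tail c v =
      ∑ e, c e * ((if head e = v then 1 else 0) - (if tail e = v then 1 else 0)) := rfl

lemma bd_single [DecidableEq E] (f : E) :
    bd head tail (Pi.single f 1) = Pi.single (head f) 1 - Pi.single (tail f) 1 := by
  funext v
  rw [bd_apply, sum_eq_single f (fun e _ he => by simp [he]) (by simp)]
  simp [Pi.single_apply, eq_comm]

lemma Conn.exists_chain [DecidableEq E] {T : Finset E} {v w : V} (h : Conn head tail T v w) :
    ∃ p : E → ℤ, (∀ e ∉ T, p e = 0) ∧ bd head tail p = Pi.single w 1 - Pi.single v 1 := by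
  induction h with
  | refl => exact ⟨0, fun _ _ => rfl, by simp⟩
  | tail _ hstep ih =>
    obtain ⟨p, hp, hbd⟩ := ih
    obtain ⟨e, heT, ⟨rfl, rfl⟩ | ⟨rfl, rfl⟩⟩ := hstep
    · refine ⟨p - Pi.single e 1, fun f hf => ?_, ?_⟩
      · simp [hp f hf, show f ≠ e by rintro rfl; exact hf heT]
      · rw [map_sub, hbd, bd_single]; abel
    · refine ⟨p + Pi.single e 1, fun f hf => ?_, ?_⟩
      · simp [hp f hf, show f ≠ e by rintro rfl; exact hf heT]
      · rw [map_add, hbd, bd_single]; abel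

lemma exists_fundamental_cycle [DecidableEq E] {T : Finset E} {f : E}
    (h : Conn head tail T (head f) (tail f)) :
    ∃ g : E → ℤ, bd head tail g = 0 ∧ ∀ e ∉ T, g e = (Pi.single f 1 : E → ℤ) e := by
  obtain ⟨p, hp, hbd⟩ := h.exists_chain
  refine ⟨Pi.single f 1 + p, ?_, fun e he => by simp [hp e he]⟩
  rw [map_add, bd_single, hbd]
  abel

def cut (head tail : E → V) (A : Finset V) (e : E) : ℤ :=
  (if head e ∈ A then 1 else 0) - (if tail e ∈ A then 1 else 0)

lemma cut_dotProduct (A : Finset V) (z : E → ℤ) :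
    cut head tail A ⬝ᵥ z = ∑ u ∈ A, bd head tail z u := by
  simp only [bd_apply, mul_sub, mul_ite, mul_one, mul_zero, sum_sub_distrib]
  rw [sum_comm (s := A), sum_comm (s := A)]
  simp [dotProduct, cut, mul_sub, sum_sub_distrib, mul_comm]

lemma cut_vecMul_eq_zero {R : Type*} [Ring R] {γ : ι → E → ℤ}
    (hcyc : ∀ i, bd head tail (γ i) = 0) (A : Finset V) :
    (fun e => (cut head tail A e : R)) ᵥ* (of γ)ᵀ.map (Int.cast : ℤ → R) = 0 := by
  funext i
  have h : cut head tail A ⬝ᵥ γ i = 0 := by simp [cut_dotProduct, hcyc i]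
  simpa [vecMul, dotProduct] using congrArg (Int.cast : ℤ → R) h

lemma conn_of_cut_dotProduct_eq_zero [Fintype V] {R : Type*} [Ring R] {T : Finset E} {f : E}
    {c : E → R} (hc : ∀ e ∉ T, e ≠ f → c e = 0) (hf : c f ≠ 0)
    (horth : ∀ A, (fun e => (cut head tail A e : R)) ⬝ᵥ c = 0) :
    Conn head tail T (head f) (tail f) := by
  set A : Finset V := {u | Conn head tail T (head f) u}
  have hcutT : ∀ e ∈ T, cut head tail A e = 0 := fun e he => by
    have hstep : Conn head tail T (head e) (tail e) :=
      Relation.ReflTransGen.single ⟨e, he, Or.inl ⟨rfl, rfl⟩⟩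
    have : head e ∈ A ↔ tail e ∈ A := by
      simp only [A, mem_filter, mem_univ, true_and]
      exact ⟨fun h => h.trans hstep, fun h => h.trans hstep.symm⟩
    simp [cut, this]
  have hsum : (fun e => (cut head tail A e : R)) ⬝ᵥ c = cut head tail A f * c f :=
    sum_eq_single f (fun e _ hef => by
      by_cases he : e ∈ T
      · simp [hcutT e he]
      · simp [hc e he hef]) (by simp)
  by_contra htail
  have hhead : Conn head tail T (head f) (head f) := Relation.ReflTransGen.refl
  have hcut : cut head tail A f = 1 := by simp [cut, A, htail, hhead]
  simpa [hsum, hcut, hf] using horth A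

variable [DecidableEq E] [Fintype ι] [DecidableEq ι]

lemma conn_compl_image_of_det_ne_zero [Fintype V] {K : Type*} [Field K] {γ : ι → E → ℤ}
    (hcyc : ∀ i, bd head tail (γ i) = 0) (hconn : ∀ v w, Conn head tail univ v w)
    {φ : ι → E} (hdet : (((of γ)ᵀ.map (Int.cast : ℤ → K)).submatrix φ id).det ≠ 0)
    (v w : V) : Conn head tail (univ.image φ)ᶜ v w := by
  set M := (of γ)ᵀ.map (Int.cast : ℤ → K)
  refine conn_of_forall_edge hconn (fun f => ?_) v w
  by_cases hf : f ∈ (univ.image φ)ᶜ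
  · exact Relation.ReflTransGen.single ⟨f, hf, Or.inl ⟨rfl, rfl⟩⟩
  obtain ⟨j, -, rfl⟩ := mem_image.mp (not_not.mp (mem_compl.not.mp hf))
  obtain ⟨a, ha⟩ := mulVec_surjective_iff_isUnit.mpr ((isUnit_iff_isUnit_det _).mpr
    (IsUnit.mk0 _ hdet)) (Pi.single j 1)
  have hc (j' : ι) : (M *ᵥ a) (φ j') = (Pi.single j 1 : ι → K) j' := congrFun ha j'
  refine conn_of_cut_dotProduct_eq_zero (c := M *ᵥ a) (fun e he hej => ?_) (by simp [hc])
    (fun A => by rw [dotProduct_mulVec, cut_vecMul_eq_zero hcyc, zero_dotProduct])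
  obtain ⟨j', -, rfl⟩ := mem_image.mp (not_not.mp (mem_compl.not.mp he))
  rw [hc, Pi.single_eq_of_ne (fun h => hej (congrArg φ h))]

lemma isUnit_det_submatrix_of_conn_compl_image {γ : ι → E → ℤ}
    (hspan : LinearMap.ker (bd head tail) ≤ Submodule.span ℤ (Set.range γ))
    {φ : ι → E} (hφ : Function.Injective φ) (hT : ∀ v w, Conn head tail (univ.image φ)ᶜ v w) :
    IsUnit ((of γ)ᵀ.submatrix φ id).det := by
  choose g hg hgT using fun j => exists_fundamental_cycle (f := φ j) (hT _ _)
  choose C hC using fun j =>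
    (Submodule.mem_span_range_iff_exists_fun ℤ).mp (hspan (LinearMap.mem_ker.mpr (hg j)))
  have hCZ : of C * ((of γ)ᵀ.submatrix φ id)ᵀ = 1 := by
    ext j j'
    have := congrFun (hC j) (φ j')
    simp only [Finset.sum_apply, Pi.smul_apply, smul_eq_mul] at this
    rw [mul_apply]
    simp only [of_apply, transpose_apply, submatrix_apply, id, this,
      hgT j (φ j') (by simp), Pi.single_apply, hφ.eq_iff, one_apply, eq_comm]
  simpa only [det_transpose] using isUnit_det_of_left_inverse hCZ

variable [Fintype V]

theorem det_submatrix_sq_eq_ite {K : Type*} [Field K] {γ : ι → E → ℤ}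
    (hspan : Submodule.span ℤ (Set.range γ) = LinearMap.ker (bd head tail))
    (hconn : ∀ v w, Conn head tail univ v w)
    (hcard : Fintype.card ι + Fintype.card V = Fintype.card E + 1) (φ : ι → E) :
    (((of γ)ᵀ.map (Int.cast : ℤ → K)).submatrix φ id).det ^ 2 =
      if Function.Injective φ ∧ IsSpanningTree head tail (univ.image φ)ᶜ then 1 else 0 := by
  have hcyc (i : ι) : bd head tail (γ i) = 0 :=
    LinearMap.mem_ker.mp (hspan ▸ Submodule.subset_span (Set.mem_range_self i))
  by_cases hinj : Function.Injective φ
  swap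
  · obtain ⟨j, j', hφ, hne⟩ := Function.not_injective_iff.mp hinj
    rw [if_neg (fun h => hinj h.1), det_zero_of_row_eq hne (by ext; simp [hφ]), sq, mul_zero]
  have hcardT : #(univ.image φ)ᶜ + 1 = Fintype.card V := by
    simp only [card_compl, card_image_of_injective _ hinj, card_univ]
    have := Fintype.card_le_of_injective φ hinj
    omega
  by_cases hT : ∀ v w, Conn head tail (univ.image φ)ᶜ v w
  · rw [if_pos ⟨hinj, hcardT, hT⟩, submatrix_map, ← Int.cast_det, ← Int.cast_pow,
      Int.isUnit_sq (isUnit_det_submatrix_of_conn_compl_image hspan.ge hinj hT), Int.cast_one]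
  · rw [if_neg (fun h => hT h.2.2),
      not_imp_comm.mp (conn_compl_image_of_det_ne_zero hcyc hconn) hT, sq, mul_zero]

theorem det_transpose_mul_diagonal_mul_eq_sum_isSpanningTree {K : Type*} [Field K] [CharZero K]
    {γ : ι → E → ℤ} (hspan : Submodule.span ℤ (Set.range γ) = LinearMap.ker (bd head tail))
    (hconn : ∀ v w, Conn head tail univ v w)
    (hcard : Fintype.card ι + Fintype.card V = Fintype.card E + 1) (d : E → K) :
    (((of γ)ᵀ.map (Int.cast : ℤ → K))ᵀ * diagonal d * (of γ)ᵀ.map (Int.cast : ℤ → K)).det =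
      ∑ T : Finset E, if IsSpanningTree head tail T then ∏ e ∈ Tᶜ, d e else 0 := by
  set w : Finset E → K := fun S => if IsSpanningTree head tail Sᶜ then ∏ e ∈ S, d e else 0
  refine mul_left_cancel₀ (Nat.cast_ne_zero.mpr (Fintype.card ι).factorial_ne_zero) ?_
  rw [factorial_card_mul_det_transpose_mul_diagonal_mul]
  calc _ = ∑ φ : ι → E with Function.Injective φ, w (univ.image φ) := by
        rw [sum_filter]
        refine sum_congr rfl fun φ _ => ?_
        rw [det_submatrix_sq_eq_ite hspan hconn hcard]
        by_cases hinj : Function.Injective φ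
        · simp [w, hinj, prod_image hinj.injOn]
        · simp [hinj]
    _ = _ := by
        rw [sum_injective_eq_factorial_smul_sum_card, nsmul_eq_mul, sum_filter]
        congr 1
        refine Fintype.sum_equiv (compl_involutive.toPerm _) _ _ fun S => ?_
        by_cases hS : IsSpanningTree head tail Sᶜ
        · simp [w, hS, ← hS.card_compl hcard]
        · simp [w, hS]

end Graph

theorem symanzik_matrix_tree_general
    {V E : Type*} [Fintype V] [Fintype E] [DecidableEq V] [DecidableEq E]
    (head tail : E → V)
    (hconn : ∀ v w : V, Conn head tail (Finset.univ : Finset E) v w)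
    (x : E → ℝ) (hx : ∀ e, 0 < x e)
    (b₁ : ℕ) (hb₁ : b₁ + Fintype.card V = Fintype.card E + 1)
    (γ : Fin b₁ → (E → ℤ))
    (hγ_span : Submodule.span ℤ (Set.range γ) = LinearMap.ker (bd head tail))
    (M : Matrix E (Fin b₁) ℝ) (hM : ∀ e i, M e i = (γ i e : ℝ)) :
    (M.transpose * (Matrix.diagonal x)⁻¹ * M).det =
        (∑ T : Finset E,
          if IsSpanningTree head tail T then ∏ e ∈ Tᶜ, (x e)⁻¹ else 0) ∧
    (∏ e : E, x e) * (M.transpose * (Matrix.diagonal x)⁻¹ * M).det =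
        ∑ T : Finset E,
          if IsSpanningTree head tail T then ∏ e ∈ T, x e else 0 := by
  have hM' : M = (of γ)ᵀ.map (Int.cast : ℤ → ℝ) := by ext e i; simp [hM]
  have hinv : (diagonal x)⁻¹ = diagonal fun e => (x e)⁻¹ :=
    inv_eq_right_inv (by simp [diagonal_mul_diagonal, fun e => (hx e).ne', diagonal_one])
  have hdet : (Mᵀ * (diagonal x)⁻¹ * M).det =
      ∑ T : Finset E, if IsSpanningTree head tail T then ∏ e ∈ Tᶜ, (x e)⁻¹ else 0 := by
    rw [hinv, hM']
    exact det_transpose_mul_diagonal_mul_eq_sum_isSpanningTree hγ_span hconn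
      (by simpa using hb₁) _
  refine ⟨hdet, ?_⟩
  rw [hdet, mul_sum]
  refine sum_congr rfl fun T _ => ?_
  split_ifs
  · rw [← prod_mul_prod_compl T x, mul_assoc, ← prod_mul_distrib]
    simp [fun e => (hx e).ne']
  · rw [mul_zero]

/-- **The matrix-cycle form of the matrix-tree theorem (first Symanzik polynomial).**
Let `M` be the `|E⁺| × b₁` matrix of an integral basis `(γ₁,…,γ_{b₁})` of the cycle
group `Z₁(G,ℤ)` in the edge basis and `C = diag(x_e)`.  Then
`det(Mᵀ C⁻¹ M) = Σ_{T spanning tree} Π_{e ∉ T} x_e⁻¹`, and equivalently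
`(Π_e x_e) · det(Mᵀ C⁻¹ M) = Σ_T Π_{e ∈ T} x_e`. -/
theorem symanzik_matrix_tree
    {V E : Type*} [Fintype V] [Fintype E] [DecidableEq V] [DecidableEq E]
    (head tail : E → V)
    (hconn : ∀ v w : V, Conn head tail (Finset.univ : Finset E) v w)
    (x : E → ℝ) (hx : ∀ e, 0 < x e)
    (b₁ : ℕ) (hb₁ : b₁ + Fintype.card V = Fintype.card E + 1)
    (γ : Fin b₁ → (E → ℤ))
    (hγ_indep : LinearIndependent ℤ γ)
    (hγ_span : Submodule.span ℤ (Set.range γ) = LinearMap.ker (bd head tail))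
    (M : Matrix E (Fin b₁) ℝ) (hM : ∀ e i, M e i = (γ i e : ℝ)) :
    (M.transpose * (Matrix.diagonal x)⁻¹ * M).det =
        (∑ T : Finset E,
          if IsSpanningTree head tail T then ∏ e ∈ Tᶜ, (x e)⁻¹ else 0) ∧
    (∏ e : E, x e) * (M.transpose * (Matrix.diagonal x)⁻¹ * M).det =
        ∑ T : Finset E,
          if IsSpanningTree head tail T then ∏ e ∈ T, x e else 0 :=
  symanzik_matrix_tree_general head tail hconn x hx b₁ hb₁ γ hγ_span M hM
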